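/- Let f ∈ Homeo₀(𝕋^d) with lift F, let K ⊆ 𝕋^d be a compact f-invariant set such that f restricted to K is topologically transitive, let v ∈ ℝ^d \ {0}, λ ∈ ℝ with ρ_K(F) ⊆ λv + {v}^⊥. If sup_{n∈ℕ, z∈K} |D_v(n,z)| = ∞, then sup_{n∈ℕ} |D_v(n,z)| = ∞ for every z ∈ K whose forward orbit under f is dense in K. -/

import Mathlib

/-!
If `|D_v(n, z)| ≤ C` for all `n`, the cocycle identity `D_v(m, F^n z) = D_v(n + m, z) - D_v(n, z)`
gives `|D_v(m, ·)| ≤ 2C` along the orbit of `z`. Since `D_v(m, ·)` is continuous and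
`ℤ^d`-periodic, this bound passes to the closure of the orbit in `𝕋^d`, which is all of `K`,
contradicting the unboundedness of the deviations on `K`.
-/

open Filter Topology Set
open scoped RealInnerProductSpace

noncomputable section

abbrev E (d : ℕ) : Type := EuclideanSpace ℝ (Fin d)

/-- The integer lattice `ℤ^d` inside `ℝ^d`. -/
def intLattice (d : ℕ) : AddSubgroup (E d) where
  carrier := {x : E d | ∀ i, ∃ m : ℤ, x i = (m : ℝ)}
  zero_mem' := fun i => ⟨0, by simp⟩
  add_mem' := by
    intro a b ha hb i
    obtain ⟨m, hm⟩ := ha i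
    obtain ⟨n, hn⟩ := hb i
    refine ⟨m + n, ?_⟩
    have h : (a + b) i = a i + b i := rfl
    rw [h, hm, hn]; push_cast; ring
  neg_mem' := by
    intro a ha i
    obtain ⟨m, hm⟩ := ha i
    refine ⟨-m, ?_⟩
    have h : (-a) i = -(a i) := rfl
    rw [h, hm]; push_cast; ring

/-- The torus `𝕋^d = ℝ^d / ℤ^d`. -/
abbrev Torus (d : ℕ) : Type := E d ⧸ intLattice d

/-- The canonical projection `π : ℝ^d → 𝕋^d`. -/
def Tproj (d : ℕ) : E d → Torus d := QuotientAddGroup.mk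

/-- `F` is a lift of `f`; together with `F` being a homeomorphism this encodes
`f ∈ Homeo₀(𝕋^d)` with lift `F`. -/
def IsLiftOf {d : ℕ} (F : E d ≃ₜ E d) (f : Torus d → Torus d) : Prop :=
  (∀ z : E d, Tproj d (F z) = f (Tproj d z)) ∧
  (∀ z : E d, ∀ m ∈ intLattice d, F (z + m) = F z + m)

/-- The rotation set of `f` on `A ⊆ 𝕋^d`. -/
def rotSetOn {d : ℕ} (F : E d ≃ₜ E d) (A : Set (Torus d)) : Set (E d) :=
  {ρ | ∃ (n : ℕ → ℕ) (z : ℕ → E d), StrictMono n ∧ (∀ i, Tproj d (z i) ∈ A) ∧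
      Tendsto (fun i => (n i : ℝ)⁻¹ • ((F : E d → E d)^[n i] (z i) - z i)) atTop (𝓝 ρ)}

/-- The rotation set `ρ(F)`. -/
def rotSet {d : ℕ} (F : E d ≃ₜ E d) : Set (E d) := rotSetOn F Set.univ

/-- The deviation from the constant rotation, `D(n,z) = F^n(z) - z - nρ`. -/
def dev {d : ℕ} (F : E d ≃ₜ E d) (ρ : E d) (n : ℕ) (z : E d) : E d :=
  (F : E d → E d)^[n] z - z - (n : ℝ) • ρ

/-- The deviation parallel to `v`, `D_v(n,z) = ⟨F^n(z) - z - nρ, v⟩`. -/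
def devIn {d : ℕ} (F : E d ≃ₜ E d) (ρ : E d) (v : E d) (n : ℕ) (z : E d) : ℝ :=
  ⟪dev F ρ n z, v⟫

/-- `1, ρ_1, …, ρ_d` are linearly independent over `ℚ`. -/
def TotallyIrrational {d : ℕ} (ρ : E d) : Prop :=
  ∀ (k : Fin d → ℤ) (m : ℤ), (∑ i, (k i : ℝ) * ρ i) = (m : ℝ) → ∀ i, k i = 0

/-- `f` has bounded mean motion (w.r.t. the rotation vector `ρ`). -/
def BoundedMeanMotion {d : ℕ} (F : E d ≃ₜ E d) (ρ : E d) : Prop :=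
  ∃ C : ℝ, ∀ (n : ℕ) (z : E d), ‖dev F ρ n z‖ ≤ C

/-- `f` is non-wandering: no nonempty open set is wandering. -/
def NonWandering {d : ℕ} (f : Torus d → Torus d) : Prop :=
  ∀ U : Set (Torus d), IsOpen U → U.Nonempty → ∃ n : ℕ, 0 < n ∧ (U ∩ f^[n] '' U).Nonempty

/-- Projection of the deviation vector to the linear subspace `V`. -/
def devProj {d : ℕ} (F : E d ≃ₜ E d) (V : Submodule ℝ (E d)) (ρ : E d) (n : ℕ) (z : E d) : E d :=
  (V.orthogonalProjectionOnto (dev F ρ n z) : E d)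

/-- The set of asymptotic directions `𝒜_V(z)`. -/
def asympDirs {d : ℕ} (F : E d ≃ₜ E d) (V : Submodule ℝ (E d)) (ρ : E d) (z : E d) :
    Set (E d) :=
  {v | ‖v‖ = 1 ∧ ∀ ε > (0 : ℝ), ∀ r > (0 : ℝ), ∃ n : ℕ,
      r < ‖devProj F V ρ n z‖ ∧ ‖(‖devProj F V ρ n z‖)⁻¹ • devProj F V ρ n z - v‖ < ε}

/-- `S^+(v) = {w ∈ 𝕊^{d-1} : ⟨v,w⟩ > 0}`. -/
def Splus {d : ℕ} (v : E d) : Set (E d) := {w | ‖w‖ = 1 ∧ 0 < ⟪v, w⟫}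

/-- `z` is `ε`-Lyapunov stable for `h`. -/
def LyapStable {X : Type*} [PseudoMetricSpace X] (h : X → X) (ε : ℝ) (z : X) : Prop :=
  ∃ δ > (0 : ℝ), ∀ n : ℕ, ∀ w, dist z w < δ → dist (h^[n] z) (h^[n] w) < ε

/-- `ε_f`, the largest `ε` such that `ε`-close points have `1/2`-close images. -/
def epsF {d : ℕ} (f : Torus d → Torus d) : ℝ :=
  sSup {ε : ℝ | 0 < ε ∧ ∀ z z' : Torus d, dist z z' < ε → dist (f z) (f z') < 1 / 2}

/-- `ℤ`-indexed iterates of a homeomorphism. -/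
def iterZ {d : ℕ} (F : E d ≃ₜ E d) : ℤ → E d → E d
  | .ofNat n => (F : E d → E d)^[n]
  | .negSucc n => (F.symm : E d → E d)^[n + 1]

/-- `ℤ`-indexed deviations parallel to `v`. -/
def devZIn {d : ℕ} (F : E d ≃ₜ E d) (ρ v : E d) (n : ℤ) (z : E d) : ℝ :=
  ⟪iterZ F n z - z - (n : ℝ) • ρ, v⟫


section

variable {d : ℕ} {f : Torus d → Torus d} {F : E d ≃ₜ E d}

theorem Tproj_iterate (hlift : IsLiftOf F f) (n : ℕ) (z : E d) :
    Tproj d ((F : E d → E d)^[n] z) = f^[n] (Tproj d z) := by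
  induction n with
  | zero => rfl
  | succ n ih => rw [Function.iterate_succ_apply', Function.iterate_succ_apply', hlift.1, ih]

theorem iterate_add_of_mem_intLattice (hlift : IsLiftOf F f) (n : ℕ) (z : E d) {m : E d}
    (hm : m ∈ intLattice d) : (F : E d → E d)^[n] (z + m) = (F : E d → E d)^[n] z + m := by
  induction n with
  | zero => rfl
  | succ n ih =>
    rw [Function.iterate_succ_apply', Function.iterate_succ_apply', ih, hlift.2 _ _ hm]

theorem dev_eq_of_Tproj_eq (hlift : IsLiftOf F f) (ρ : E d) (n : ℕ) {y z : E d}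
    (h : Tproj d y = Tproj d z) : dev F ρ n y = dev F ρ n z := by
  have hm : -z + y ∈ intLattice d := QuotientAddGroup.eq.mp h.symm
  have hy : y = z + (-z + y) := by abel
  rw [hy, dev, dev, iterate_add_of_mem_intLattice hlift n z hm]
  abel

theorem dev_add (ρ : E d) (n k : ℕ) (z : E d) :
    dev F ρ (n + k) z = dev F ρ n z + dev F ρ k ((F : E d → E d)^[n] z) := by
  simp only [dev, add_comm n k, Function.iterate_add_apply, Nat.cast_add, add_smul]
  abel

theorem devIn_add (ρ v : E d) (n k : ℕ) (z : E d) :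
    devIn F ρ v (n + k) z = devIn F ρ v n z + devIn F ρ v k ((F : E d → E d)^[n] z) := by
  simp only [devIn, dev_add, inner_add_left]

theorem continuous_devIn (ρ v : E d) (n : ℕ) : Continuous (devIn F ρ v n) :=
  (((F.continuous.iterate n).sub continuous_id).sub continuous_const).inner continuous_const

theorem abs_devIn_le_of_mem_closure_orbit (hlift : IsLiftOf F f) {ρ v z : E d} {C : ℝ}
    (hz : ∀ n, |devIn F ρ v n z| ≤ C) {y : E d}
    (hy : Tproj d y ∈ closure (range fun n : ℕ => f^[n] (Tproj d z))) (m : ℕ) :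
    |devIn F ρ v m y| ≤ 2 * C := by
  set S : Set (E d) := {x | |devIn F ρ v m x| ≤ 2 * C}
  have hS : Tproj d ⁻¹' (Tproj d '' S) = S := by
    refine Subset.antisymm (fun x ⟨x', hx', hxx'⟩ => ?_) (subset_preimage_image _ _)
    simpa only [S, mem_ofPred_eq, devIn, dev_eq_of_Tproj_eq hlift ρ m hxx'] using hx'
  have hclosed : IsClosed (Tproj d '' S) := by
    rw [← (QuotientAddGroup.isQuotientMap_mk (intLattice d)).isClosed_preimage]
    change IsClosed (Tproj d ⁻¹' (Tproj d '' S))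
    rw [hS]
    exact isClosed_le (continuous_devIn ρ v m).abs continuous_const
  have horbit : range (fun n : ℕ => f^[n] (Tproj d z)) ⊆ Tproj d '' S := by
    rintro _ ⟨n, rfl⟩
    refine ⟨(F : E d → E d)^[n] z, ?_, Tproj_iterate hlift n z⟩
    have hcocycle : devIn F ρ v m ((F : E d → E d)^[n] z)
        = devIn F ρ v (n + m) z - devIn F ρ v n z := by
      rw [devIn_add]; ring
    calc |devIn F ρ v m ((F : E d → E d)^[n] z)|
        ≤ |devIn F ρ v (n + m) z| + |devIn F ρ v n z| := hcocycle ▸ abs_sub _ _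
      _ ≤ 2 * C := by linarith [hz (n + m), hz n]
  show y ∈ S
  rw [← hS]
  exact closure_minimal horbit hclosed hy

end

theorem unbounded_devIn_of_denseOrbit_general {d : ℕ} (f : Torus d → Torus d) (F : E d ≃ₜ E d)
    (hlift : IsLiftOf F f) (K : Set (Torus d))
    (v : E d) (lam : ℝ)
    (hunb : ∀ C : ℝ, ∃ (n : ℕ) (z : E d), Tproj d z ∈ K ∧ C < |devIn F (lam • v) v n z|) :
    ∀ z : E d, Tproj d z ∈ K →
      K ⊆ closure (Set.range fun n : ℕ => f^[n] (Tproj d z)) →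
      ∀ C : ℝ, ∃ n : ℕ, C < |devIn F (lam • v) v n z| := by
  intro z _ hdense C
  by_contra! hbounded
  obtain ⟨m, y, hyK, hy⟩ := hunb (2 * C)
  exact hy.not_ge (abs_devIn_le_of_mem_closure_orbit hlift hbounded (hdense hyK) m)

/-- **Corollary (transitive orbits).** If `f|K` is topologically transitive,
`ρ_K(F) ⊆ λv + {v}^⊥` and the deviations parallel to `v` are unbounded on `K`, then
every point of `K` with dense forward orbit has unbounded deviations. -/
theorem unbounded_devIn_of_denseOrbit {d : ℕ} (f : Torus d → Torus d) (F : E d ≃ₜ E d)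
    (hlift : IsLiftOf F f) (K : Set (Torus d)) (hKc : IsCompact K) (hKinv : f '' K = K)
    (htrans : ∃ z₀ ∈ K, K ⊆ closure (Set.range fun n : ℕ => f^[n] z₀))
    (v : E d) (hv : v ≠ 0) (lam : ℝ)
    (hrot : ∀ ρ' ∈ rotSetOn F K, ⟪ρ' - lam • v, v⟫ = 0)
    (hunb : ∀ C : ℝ, ∃ (n : ℕ) (z : E d), Tproj d z ∈ K ∧ C < |devIn F (lam • v) v n z|) :
    ∀ z : E d, Tproj d z ∈ K →
      K ⊆ closure (Set.range fun n : ℕ => f^[n] (Tproj d z)) →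
      ∀ C : ℝ, ∃ n : ℕ, C < |devIn F (lam • v) v n z| :=
  unbounded_devIn_of_denseOrbit_general f F hlift K v lam hunb

end
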